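/- The class of languages over a fixed alphabet Σ recognized by finite idempotent commutative monoids (semilattices) is exactly the Boolean algebra generated by the languages Σ*aΣ* for a ∈ Σ. -/

import Mathlib

/-!
In an idempotent commutative monoid the image of a word depends only on its set of letters,
so a language recognized by a semilattice is a union of classes "the set of letters is exactly
`s`", and each such class is the intersection of the `Σ*aΣ*` for `a ∈ s` with the complements
of those for `a ∉ s`. Conversely `Σ*aΣ*` is recognized by the two-element semilattice
`({0, 1}, *)`, and recognizability by finite semilattices is preserved under Boolean
operations: complement changes the accepting set, intersection uses the product monoid.
-/

/-- Membership in the Boolean algebra generated by a family G of subsets of X: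
closure under finite unions (including the empty union), finite intersections
and complement. -/
inductive GenBoolAlg {X : Type*} (G : Set (Set X)) : Set X → Prop
  | basic {s : Set X} : s ∈ G → GenBoolAlg G s
  | empty : GenBoolAlg G ∅
  | union {s t : Set X} : GenBoolAlg G s → GenBoolAlg G t → GenBoolAlg G (s ∪ t)
  | inter {s t : Set X} : GenBoolAlg G s → GenBoolAlg G t → GenBoolAlg G (s ∩ t)
  | compl {s : Set X} : GenBoolAlg G s → GenBoolAlg G sᶜ

namespace GenBoolAlg

variable {X : Type*} {G : Set (Set X)}

def booleanSubalgebra (G : Set (Set X)) : BooleanSubalgebra (Set X) where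
  carrier := {s | GenBoolAlg G s}
  supClosed' _ hs _ ht := union hs ht
  infClosed' _ hs _ ht := inter hs ht
  compl_mem' := compl
  bot_mem' := empty

theorem iUnion {ι : Type*} [Finite ι] {f : ι → Set X} (h : ∀ i, GenBoolAlg G (f i)) :
    GenBoolAlg G (⋃ i, f i) :=
  BooleanSubalgebra.iSup_mem (L := booleanSubalgebra G) h

theorem iInter {ι : Type*} [Finite ι] {f : ι → Set X} (h : ∀ i, GenBoolAlg G (f i)) :
    GenBoolAlg G (⋂ i, f i) :=
  BooleanSubalgebra.iInf_mem (L := booleanSubalgebra G) h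

end GenBoolAlg

namespace FreeMonoid

variable {α M : Type*}

theorem map_eq_prod_symbols [DecidableEq α] [CommMonoid M] (hM : ∀ x : M, x * x = x)
    (ρ : FreeMonoid α →* M) (w : FreeMonoid α) : ρ w = ∏ a ∈ w.symbols, ρ (of a) := by
  induction w using FreeMonoid.inductionOn' with
  | one => simp
  | of_mul b w ih =>
    rw [map_mul, ih, symbols_mul, symbols_of, Finset.singleton_union]
    by_cases hb : b ∈ w.symbols
    · rw [Finset.insert_eq_of_mem hb, ← Finset.mul_prod_erase _ _ hb, ← mul_assoc, hM]
    · rw [Finset.prod_insert hb]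

def letterLanguages (α : Type*) : Set (Set (FreeMonoid α)) :=
  {S | ∃ a : α, S = {w | a ∈ toList w}}

theorem genBoolAlg_symbols_preimage [DecidableEq α] [Finite α] (T : Set (Finset α)) :
    GenBoolAlg (letterLanguages α) (symbols ⁻¹' T) := by
  have fiber (s : Finset α) :
      symbols ⁻¹' {s} = ⋂ a, {w : FreeMonoid α | a ∈ toList w ↔ a ∈ s} := by
    ext w
    simp only [Set.mem_preimage, Set.mem_singleton_iff, Finset.ext_iff, mem_symbols, Iff.comm,
      Set.mem_iInter, Set.mem_ofPred_eq]
    rfl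
  have hT : symbols ⁻¹' T = ⋃ s : T, symbols ⁻¹' {(s : Finset α)} := by
    ext w
    simp
  rw [hT]
  refine GenBoolAlg.iUnion fun s => ?_
  rw [fiber]
  refine GenBoolAlg.iInter fun a => ?_
  have ha' : GenBoolAlg (letterLanguages α) {w | a ∈ toList w} := .basic ⟨a, rfl⟩
  by_cases ha : a ∈ (s : Finset α)
  · simpa [ha] using ha'
  · simpa [ha, Set.compl_ofPred] using ha'.compl

end FreeMonoid

open FreeMonoid

def IsSemilatticeRecognizable {α : Type*} (L : Set (FreeMonoid α)) : Prop :=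
  ∃ (M : Type) (_ : CommMonoid M) (_ : Finite M), (∀ x : M, x * x = x) ∧
    ∃ (ρ : FreeMonoid α →* M) (F : Set M), L = ρ ⁻¹' F

namespace IsSemilatticeRecognizable

variable {α : Type*} {L K : Set (FreeMonoid α)}

theorem compl (hL : IsSemilatticeRecognizable L) : IsSemilatticeRecognizable Lᶜ := by
  obtain ⟨M, _, _, hM, ρ, F, rfl⟩ := hL
  exact ⟨M, _, ‹_›, hM, ρ, Fᶜ, rfl⟩

theorem inter (hL : IsSemilatticeRecognizable L) (hK : IsSemilatticeRecognizable K) :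
    IsSemilatticeRecognizable (L ∩ K) := by
  obtain ⟨M, _, _, hM, ρ, F, rfl⟩ := hL
  obtain ⟨N, _, _, hN, σ, E, rfl⟩ := hK
  exact ⟨M × N, _, inferInstance, fun x => Prod.ext (hM x.1) (hN x.2), ρ.prod σ, F ×ˢ E,
    rfl⟩

theorem union (hL : IsSemilatticeRecognizable L) (hK : IsSemilatticeRecognizable K) :
    IsSemilatticeRecognizable (L ∪ K) := by
  simpa only [Set.compl_inter, compl_compl] using (hL.compl.inter hK.compl).compl

end IsSemilatticeRecognizable

theorem isSemilatticeRecognizable_empty {α : Type*} :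
    IsSemilatticeRecognizable (∅ : Set (FreeMonoid α)) :=
  ⟨Unit, _, inferInstance, fun _ => rfl, 1, ∅, rfl⟩

-- `ZMod 2` under multiplication is the two-element semilattice.
theorem isSemilatticeRecognizable_setOf_mem_toList {α : Type*} [DecidableEq α] (a : α) :
    IsSemilatticeRecognizable {w : FreeMonoid α | a ∈ toList w} := by
  refine ⟨ZMod 2, _, inferInstance, by decide,
    lift fun b => if b = a then 0 else 1, {0}, ?_⟩
  ext w
  simp [lift_apply, List.prod_eq_zero_iff]

theorem GenBoolAlg.isSemilatticeRecognizable {α : Type*} {L : Set (FreeMonoid α)}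
    (hL : GenBoolAlg (letterLanguages α) L) : IsSemilatticeRecognizable L := by
  classical
  induction hL with
  | basic hs =>
    obtain ⟨a, rfl⟩ := hs
    exact isSemilatticeRecognizable_setOf_mem_toList a
  | empty => exact isSemilatticeRecognizable_empty
  | union _ _ hs ht => exact hs.union ht
  | inter _ _ hs ht => exact hs.inter ht
  | compl _ hs => exact hs.compl

theorem IsSemilatticeRecognizable.genBoolAlg {α : Type*} [Finite α] {L : Set (FreeMonoid α)}
    (hL : IsSemilatticeRecognizable L) : GenBoolAlg (letterLanguages α) L := by
  classical
  obtain ⟨M, _, _, hM, ρ, F, rfl⟩ := hL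
  have hρ : ρ ⁻¹' F = symbols ⁻¹' {s | ∏ a ∈ s, ρ (of a) ∈ F} := by
    ext w
    simp [map_eq_prod_symbols hM ρ w]
  rw [hρ]
  exact genBoolAlg_symbols_preimage _

/-- The languages over a fixed finite alphabet Σ recognized by finite
idempotent commutative monoids (semilattices) are exactly the Boolean algebra
generated by the languages Σ*aΣ* for a ∈ Σ. -/
theorem stmt_16 (α : Type) [Finite α] (L : Set (FreeMonoid α)) :
    (∃ (M : Type) (_ : CommMonoid M) (_ : Finite M),
        (∀ x : M, x * x = x) ∧
        ∃ (ρ : FreeMonoid α →* M) (F : Set M), L = ρ ⁻¹' F) ↔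
    GenBoolAlg {S : Set (FreeMonoid α) |
        ∃ a : α, S = {w : FreeMonoid α | a ∈ FreeMonoid.toList w}} L :=
  ⟨IsSemilatticeRecognizable.genBoolAlg, GenBoolAlg.isSemilatticeRecognizable⟩
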